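/- Let K be a field, I ⊆ K[x_1,...,x_n] a zero-dimensional ideal, A = K[x_1,...,x_n]/I the (finite-dimensional) quotient algebra, and f ∈ K[x_1,...,x_n]. Then the eigenvalues of the multiplication-by-f endomorphism m_f : A → A (over an algebraic closure of K) are exactly the values f(a) for points a in the variety V(I) over the algebraic closure. -/

import Mathlib

open MvPolynomial TensorProduct

/-!
After base change to an algebraically closed field `L`, `m_f` becomes multiplication by `1 ⊗ f`
on the finite-dimensional commutative `L`-algebra `L ⊗[K] A`, so its eigenvalues form the spectrum
of `1 ⊗ f`. Every residue field of a finite-dimensional algebra over `L` is `L` itself, so that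
spectrum is the set of values `χ (1 ⊗ f)` of `L`-algebra homomorphisms `χ : L ⊗[K] A → L`. These
correspond to `K`-algebra homomorphisms `A → L`, that is, to points of `V(I)` with coordinates
in `L`.
-/

theorem Algebra.spectrum_lmul {R A : Type*} [CommRing R] [Ring A] [Algebra R A] (a : A) :
    spectrum R (Algebra.lmul R A a) = spectrum R a := by
  ext r
  rw [spectrum.mem_iff, spectrum.mem_iff, ← (Algebra.lmul R A).commutes, ← map_sub,
    Algebra.lmul_isUnit_iff]

theorem Algebra.hasEigenvalue_lmul_iff_mem_spectrum {K A : Type*} [Field K] [Ring A]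
    [Algebra K A] [FiniteDimensional K A] (a : A) (μ : K) :
    Module.End.HasEigenvalue (Algebra.lmul K A a) μ ↔ μ ∈ spectrum K a := by
  rw [Module.End.hasEigenvalue_iff_mem_spectrum, Algebra.spectrum_lmul]

theorem IsAlgClosed.mem_spectrum_iff_exists_algHom {K A : Type*} [Field K] [IsAlgClosed K]
    [CommRing A] [Algebra K A] [Module.Finite K A] (a : A) (μ : K) :
    μ ∈ spectrum K a ↔ ∃ χ : A →ₐ[K] K, χ a = μ := by
  refine ⟨fun h => ?_, fun ⟨χ, hχ⟩ => hχ ▸ AlgHom.apply_mem_spectrum χ a⟩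
  obtain ⟨M, hM, hμM⟩ := exists_max_ideal_of_mem_nonunits (spectrum.mem_iff.mp h)
  let := Ideal.Quotient.field M
  -- `A ⧸ M` is a finite field extension of the algebraically closed field `K`, hence `K` itself.
  let e : K ≃ₐ[K] A ⧸ M :=
    AlgEquiv.ofBijective (Algebra.ofId K (A ⧸ M)) IsAlgClosed.algebraMap_bijective_of_isIntegral
  refine ⟨e.symm.toAlgHom.comp (Ideal.Quotient.mkₐ K M), ?_⟩
  have hχ : (e.symm.toAlgHom.comp (Ideal.Quotient.mkₐ K M)) (algebraMap K A μ - a) = 0 := by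
    simp [Ideal.Quotient.mkₐ_eq_mk, Ideal.Quotient.eq_zero_iff_mem.mpr hμM]
  rw [map_sub, AlgHom.commutes, Algebra.algebraMap_self, RingHom.id_apply, sub_eq_zero] at hχ
  exact hχ.symm

theorem MvPolynomial.exists_algHom_quotient_iff {σ R S : Type*} [CommRing R] [CommRing S]
    [Algebra R S] (I : Ideal (MvPolynomial σ R)) (f : MvPolynomial σ R) (s : S) :
    (∃ ψ : MvPolynomial σ R ⧸ I →ₐ[R] S, ψ (Ideal.Quotient.mk I f) = s) ↔
      ∃ a : σ → S, (∀ p ∈ I, aeval a p = 0) ∧ aeval a f = s := by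
  constructor
  · rintro ⟨ψ, rfl⟩
    have hψ : ψ.comp (Ideal.Quotient.mkₐ R I) = aeval (fun i => ψ (Ideal.Quotient.mk I (X i))) :=
      aeval_unique _
    refine ⟨fun i => ψ (Ideal.Quotient.mk I (X i)), fun p hp => ?_, ?_⟩
    · rw [← hψ]
      simp [Ideal.Quotient.mkₐ_eq_mk, Ideal.Quotient.eq_zero_iff_mem.mpr hp]
    · rw [← hψ]
      rfl
  · rintro ⟨a, haI, rfl⟩
    exact ⟨Ideal.Quotient.liftₐ I (aeval a) haI, rfl⟩

theorem IsAlgClosed.hasEigenvalue_baseChange_mulLeft_iff {K L A : Type*} [Field K] [Field L]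
    [IsAlgClosed L] [Algebra K L] [CommRing A] [Algebra K A] [FiniteDimensional K A] (a : A)
    (μ : L) :
    Module.End.HasEigenvalue ((LinearMap.mulLeft K a).baseChange L) μ ↔
      ∃ ψ : A →ₐ[K] L, ψ a = μ := by
  change Module.End.HasEigenvalue ((Algebra.lmul K A a).baseChange L) μ ↔ _
  rw [Algebra.baseChange_lmul, Algebra.hasEigenvalue_lmul_iff_mem_spectrum,
    mem_spectrum_iff_exists_algHom]
  exact ((AlgHom.liftEquiv K L A L).exists_congr_left (p := fun ψ => ψ a = μ)).symm

/-- Eigenvalue theorem: let `I ⊆ K[x_1,…,x_n]` be a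
zero-dimensional ideal (i.e. `A = K[x_1,…,x_n]/I` is finite dimensional over
`K`) and `f ∈ K[x_1,…,x_n]`. Then the eigenvalues (over an algebraic closure
of `K`) of the multiplication-by-`f` endomorphism of `A` are exactly the
values of `f` at the points of `V(I)` over the algebraic closure. -/
theorem eigenvalue_theorem (K : Type*) [Field K] (n : ℕ)
    (I : Ideal (MvPolynomial (Fin n) K))
    (hdim : FiniteDimensional K (MvPolynomial (Fin n) K ⧸ I))
    (f : MvPolynomial (Fin n) K) (μ : AlgebraicClosure K) :
    Module.End.HasEigenvalue
        (LinearMap.baseChange (AlgebraicClosure K)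
          (LinearMap.mulLeft K (Ideal.Quotient.mk I f))) μ ↔
      ∃ a : Fin n → AlgebraicClosure K,
        (∀ p ∈ I, MvPolynomial.aeval a p = 0) ∧ MvPolynomial.aeval a f = μ :=
  (IsAlgClosed.hasEigenvalue_baseChange_mulLeft_iff _ μ).trans (exists_algHom_quotient_iff I f μ)
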